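/- Let f be C² on an interval containing both x and y = (p₁+θ₁)/q, with |f''| ≤ c₂ on that interval. If Q ≤ q ≤ 2Q, |x − y| ≤ C₁/(Q²δ), and |q(x f'(x) − f(x)) − p₁ f'(x) + p₂ − (θ₁ f'(x) − θ₂)| ≤ 3c₀δ, then |q f(y) − p₂ − θ₂| ≤ 3c₀δ + (c₂/2)·2Q·(C₁/(Q²δ))². -/

import Mathlib

open Real

lemma taylor2_lt (f : ℝ → ℝ) (hf : ContDiff ℝ 2 f) (x y : ℝ) (hxy : x < y) :
    ∃ t ∈ Set.Ioo x y, f y = f x + deriv f x * (y - x) + deriv (deriv f) t * (y - x) ^ 2 / 2 := by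
  have hf' : ContDiff ℝ ((1 : ℕ) + 1) f := by exact_mod_cast hf
  have hder : ContDiff ℝ 1 (deriv f) := (contDiff_succ_iff_deriv.mp hf').2.2
  have hdf : Differentiable ℝ f := hf'.differentiable (by norm_num)
  have hEq : ∀ t ∈ Set.Icc x y, iteratedDerivWithin 1 f (Set.Icc x y) t = deriv f t := by
    intro t ht
    rw [iteratedDerivWithin_one]
    exact (hdf t).derivWithin (uniqueDiffOn_Icc hxy t ht)
  have hdiff : DifferentiableOn ℝ (iteratedDerivWithin 1 f (Set.Icc x y)) (Set.Ioo x y) := by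
    apply DifferentiableOn.congr ((hder.differentiable one_ne_zero).differentiableOn)
    intro t ht; exact hEq t (Set.Ioo_subset_Icc_self ht)
  obtain ⟨t, ht, htaylor⟩ := taylor_mean_remainder_lagrange (n := 1) hxy.ne
    ((hf.of_le (by norm_num)).contDiffOn) (by rw [Set.uIcc_of_le hxy.le, Set.uIoo_of_le hxy.le]; exact hdiff)
  rw [Set.uIcc_of_le hxy.le] at htaylor; rw [Set.uIoo_of_le hxy.le] at ht
  refine ⟨t, ht, ?_⟩
  have h2 : iteratedDerivWithin 2 f (Set.Icc x y) t = deriv (deriv f) t := by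
    have ht' : t ∈ Set.Icc x y := Set.Ioo_subset_Icc_self ht
    rw [show (2 : ℕ) = 1 + 1 from rfl, iteratedDerivWithin_succ]
    have : Set.EqOn (iteratedDerivWithin 1 f (Set.Icc x y)) (deriv f) (Set.Icc x y) := hEq
    rw [derivWithin_congr this (hEq t ht')]
    rw [(hder.differentiable one_ne_zero t).derivWithin (uniqueDiffOn_Icc hxy t ht')]
  have hTpoly : taylorWithinEval f 1 (Set.Icc x y) x y = f x + deriv f x * (y - x) := by
    rw [taylor_within_apply]
    simp [Finset.sum_range_succ, hEq x (Set.left_mem_Icc.mpr hxy.le)]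
    ring
  rw [hTpoly, h2] at htaylor
  rw [show ((1:ℕ) + 1) = 2 from rfl] at htaylor
  norm_num at htaylor
  linarith [htaylor]

lemma taylor2 (f : ℝ → ℝ) (hf : ContDiff ℝ 2 f) (x y : ℝ) :
    ∃ t ∈ Set.uIcc x y,
      f y = f x + deriv f x * (y - x) + deriv (deriv f) t * (y - x) ^ 2 / 2 := by
  rcases lt_trichotomy x y with h | h | h
  · obtain ⟨t, ht, he⟩ := taylor2_lt f hf x y h
    exact ⟨t, by rw [Set.uIcc_of_le h.le]; exact Set.Ioo_subset_Icc_self ht, he⟩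
  · exact ⟨x, Set.left_mem_uIcc, by rw [h]; ring⟩
  · -- y < x : apply to g t = f (-t)
    set g : ℝ → ℝ := fun t => f (-t) with hg
    have hgC : ContDiff ℝ 2 g := hf.comp (contDiff_neg)
    obtain ⟨s, hs, he⟩ := taylor2_lt g hgC (-x) (-y) (by linarith)
    have hd1 : ∀ a : ℝ, deriv g a = -deriv f (-a) := by
      intro a
      have := iteratedDeriv_comp_neg 1 f a
      simpa [iteratedDeriv_one] using this
    have hd2 : deriv (deriv g) s = deriv (deriv f) (-s) := by
      have := iteratedDeriv_comp_neg 2 f s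
      simp only [show (2:ℕ) = 1 + 1 from rfl, iteratedDeriv_succ, iteratedDeriv_zero] at this
      simpa using this
    refine ⟨-s, ?_, ?_⟩
    · rw [Set.uIcc_of_ge h.le]
      obtain ⟨h1, h2⟩ := hs
      constructor <;> [linarith; linarith]
    · have : f y = f x + (-deriv f x) * (-y - -x) + deriv (deriv g) s * (-y - -x) ^ 2 / 2 := by
        simp only [hd1] at he; simpa [hg] using he
      rw [hd2] at this
      rw [this]; ring


/-- Taylor expansion step: if `|f''| ≤ c₂` on `[a,b]`, `x, y = (p₁+θ₁)/q ∈ [a,b]`,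
`Q ≤ q ≤ 2Q`, `|x - y| ≤ C₁/(Q²δ)` and
`|q(x f'(x) - f(x)) - p₁ f'(x) + p₂ - (θ₁ f'(x) - θ₂)| ≤ 3c₀δ`, then
`|q f(y) - p₂ - θ₂| ≤ 3c₀δ + (c₂/2)·2Q·(C₁/(Q²δ))²`. -/
theorem taylor_step (a b : ℝ) (hab : a ≤ b) (f : ℝ → ℝ) (hf : ContDiff ℝ 2 f)
    (c₂ c₀ C₁ δ Q θ₁ θ₂ : ℝ) (q p₁ p₂ : ℤ)
    (hc₂ : ∀ t ∈ Set.Icc a b, |deriv (deriv f) t| ≤ c₂)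
    (hc₀ : 0 < c₀) (hC₁ : 0 < C₁) (hδ : 0 < δ) (hQ : 1 ≤ Q)
    (hq₁ : Q ≤ (q : ℝ)) (hq₂ : (q : ℝ) ≤ 2 * Q)
    (x : ℝ) (hx : x ∈ Set.Icc a b) (y : ℝ) (hy : y = ((p₁ : ℝ) + θ₁) / (q : ℝ))
    (hyI : y ∈ Set.Icc a b) (hxy : |x - y| ≤ C₁ / (Q ^ 2 * δ))
    (hmain : |(q : ℝ) * (x * deriv f x - f x) - (p₁ : ℝ) * deriv f x + (p₂ : ℝ) -
        (θ₁ * deriv f x - θ₂)| ≤ 3 * c₀ * δ) :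
    |(q : ℝ) * f y - (p₂ : ℝ) - θ₂| ≤
      3 * c₀ * δ + c₂ / 2 * (2 * Q) * (C₁ / (Q ^ 2 * δ)) ^ 2 := by
  have hq0 : (0 : ℝ) < (q : ℝ) := lt_of_lt_of_le (by linarith) hq₁
  have hqy : (q : ℝ) * y = (p₁ : ℝ) + θ₁ := by
    rw [hy]; field_simp
  obtain ⟨t, htmem, he⟩ := taylor2 f hf x y
  have htab : t ∈ Set.Icc a b := Set.uIcc_subset_Icc hx hyI htmem
  have hc2t : |deriv (deriv f) t| ≤ c₂ := hc₂ t htab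
  have hc2nn : 0 ≤ c₂ := le_trans (abs_nonneg _) hc2t
  -- key identity
  have key : (q : ℝ) * f y - (p₂ : ℝ) - θ₂ =
      -((q : ℝ) * (x * deriv f x - f x) - (p₁ : ℝ) * deriv f x + (p₂ : ℝ) -
        (θ₁ * deriv f x - θ₂)) + (q : ℝ) * (deriv (deriv f) t * (y - x) ^ 2 / 2) := by
    rw [he]
    have : (q : ℝ) * (y - x) = (p₁ : ℝ) + θ₁ - (q : ℝ) * x := by rw [← hqy]; ring
    linear_combination deriv f x * this
  have hsq : (y - x) ^ 2 ≤ (C₁ / (Q ^ 2 * δ)) ^ 2 := by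
    have : |y - x| ≤ C₁ / (Q ^ 2 * δ) := by rwa [abs_sub_comm] at hxy
    calc (y - x) ^ 2 = |y - x| ^ 2 := (sq_abs _).symm
      _ ≤ (C₁ / (Q ^ 2 * δ)) ^ 2 := pow_le_pow_left₀ (abs_nonneg _) this 2
  have hrem : |(q : ℝ) * (deriv (deriv f) t * (y - x) ^ 2 / 2)| ≤
      c₂ / 2 * (2 * Q) * (C₁ / (Q ^ 2 * δ)) ^ 2 := by
    rw [abs_mul, abs_of_pos hq0, abs_div, abs_mul, abs_of_nonneg (sq_nonneg (y - x))]
    have h1 : |deriv (deriv f) t| * (y - x) ^ 2 ≤ c₂ * (C₁ / (Q ^ 2 * δ)) ^ 2 :=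
      mul_le_mul hc2t hsq (sq_nonneg _) hc2nn
    have h2 : |(2 : ℝ)| = 2 := by norm_num
    rw [h2]
    calc (q : ℝ) * (|deriv (deriv f) t| * (y - x) ^ 2 / 2)
        ≤ (2 * Q) * (c₂ * (C₁ / (Q ^ 2 * δ)) ^ 2 / 2) := by
          apply mul_le_mul hq₂ (by linarith) (by positivity) (by linarith)
      _ = c₂ / 2 * (2 * Q) * (C₁ / (Q ^ 2 * δ)) ^ 2 := by ring
  calc |(q : ℝ) * f y - (p₂ : ℝ) - θ₂|
      ≤ |-((q : ℝ) * (x * deriv f x - f x) - (p₁ : ℝ) * deriv f x + (p₂ : ℝ) -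
        (θ₁ * deriv f x - θ₂))| + |(q : ℝ) * (deriv (deriv f) t * (y - x) ^ 2 / 2)| := by
        rw [key]; exact abs_add_le _ _
    _ ≤ 3 * c₀ * δ + c₂ / 2 * (2 * Q) * (C₁ / (Q ^ 2 * δ)) ^ 2 := by
        rw [abs_neg]; exact add_le_add hmain hrem
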